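/- arXiv:1608.05550 — 3 statements merged into one kernel-verified Lean document; each statement's English description precedes it below -/
import Mathlib

section
/- No MUPS of a string S can contain another distinct MUPS: for any two distinct intervals [i1,j1], [i2,j2] that are both MUPSs of S, it is not the case that i1 ≤ i2 ≤ j2 ≤ j1. -/
/-!
Reflecting a palindrome `w₂ = S[i₂..j₂]` inside a palindrome `w₁ = S[i₁..j₁]` about the center of
`w₁` gives a second occurrence of `w₂`; as `w₂` is unique, it must be centered in `w₁`. If the
intervals differ, `w₂` then lies inside `S[i₁+1..j₁-1]`, which occurs twice by minimality of `w₁`,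
so `w₂` would occur twice as well.
-/

/-- `sub S i j` is the substring `S[i..j]`, 1-indexed and inclusive. -/
def sub (S : List Char) (i j : ℕ) : List Char := (S.drop (i-1)).take (j+1-i)

/-- A string is a palindrome if it equals its reversal. -/
def isPal (w : List Char) : Prop := w.reverse = w

/-- The set of (1-indexed) occurrence positions of `w` in `S`. -/
def occs (S w : List Char) : Finset ℕ :=
  (Finset.Icc 1 S.length).filter (fun p => sub S p (p + w.length - 1) = w)

/-- `w` occurs exactly once in `S`. -/
def uniqueIn (S w : List Char) : Prop := (occs S w).card = 1

/-- `[i,j]` is (the interval of) a unique palindromic substring of `S`. -/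
def UPS (S : List Char) (i j : ℕ) : Prop :=
  1 ≤ i ∧ i ≤ j ∧ j ≤ S.length ∧ isPal (sub S i j) ∧ uniqueIn S (sub S i j)

/-- `[i,j]` is a minimal unique palindromic substring of `S`. -/
def MUPS (S : List Char) (i j : ℕ) : Prop :=
  UPS S i j ∧ (j + 1 - i ≤ 2 ∨ 2 ≤ (occs S (sub S (i+1) (j-1))).card)

/-- `[i,j]` is a shortest unique palindromic substring of `S` for the query `[s,t]`. -/
def SUPS (S : List Char) (s t i j : ℕ) : Prop :=
  UPS S i j ∧ i ≤ s ∧ s ≤ t ∧ t ≤ j ∧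
    ∀ i' j', UPS S i' j' → i' ≤ s → t ≤ j' → j - i ≤ j' - i'

/-- Positions are 1-indexed, as in `occs`. -/
def occursAt (S w : List Char) (p : ℕ) : Prop :=
  ∃ pre post : List Char, S = pre ++ w ++ post ∧ pre.length + 1 = p

theorem occursAt.infix {S v A u B : List Char} {p : ℕ} (h : occursAt S v p)
    (hv : v = A ++ u ++ B) : occursAt S u (p + A.length) := by
  obtain ⟨pre, post, hS, hp⟩ := h
  exact ⟨pre ++ A, B ++ post, by simp [hS, hv], by simp; omega⟩

theorem List.eq_reverse_append_append_reverse_of_palindrome {α : Type*} {v A u B : List α}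
    (hv : v.reverse = v) (hu : u.reverse = u) (h : v = A ++ u ++ B) :
    v = B.reverse ++ u ++ A.reverse := by
  rw [← hv, h]
  simp only [List.reverse_append, List.append_assoc, hu]

section Substrings

variable {S : List Char} {i j : ℕ}

theorem length_sub (hi : 1 ≤ i) (hj : j ≤ S.length) : (sub S i j).length = j + 1 - i := by
  simp [sub]; omega

theorem sub_ne_nil (hi : 1 ≤ i) (hij : i ≤ j) (hj : j ≤ S.length) : sub S i j ≠ [] := by
  rw [← List.length_pos_iff, length_sub hi hj]; omega

theorem occursAt_sub (hi : 1 ≤ i) (hij : i ≤ j) (hj : j ≤ S.length) :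
    occursAt S (sub S i j) i := by
  refine ⟨S.take (i - 1), S.drop j, ?_, by rw [List.length_take]; omega⟩
  conv_lhs => rw [← List.take_append_drop (i - 1) S]
  rw [← List.take_append_drop (j + 1 - i) (S.drop (i - 1)), List.drop_drop,
    show i - 1 + (j + 1 - i) = j by omega, sub, List.append_assoc]

theorem sub_eq_append_sub_append {i' j' : ℕ} (hi : 1 ≤ i) (hii' : i ≤ i') (hij' : i' ≤ j')
    (hj'j : j' ≤ j) (hj : j ≤ S.length) :
    ∃ A B : List Char, sub S i j = A ++ sub S i' j' ++ B ∧
      A.length = i' - i ∧ B.length = j - j' := by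
  refine ⟨(S.drop (i - 1)).take (i' - i), (S.drop j').take (j - j'), ?_, ?_, ?_⟩
  · rw [sub, sub, show j + 1 - i = (i' - i) + ((j' + 1 - i') + (j - j')) by omega,
      List.take_add, List.take_add, List.drop_drop, List.drop_drop,
      show i - 1 + (i' - i) = i' - 1 by omega, show i' - 1 + (j' + 1 - i') = j' by omega,
      List.append_assoc]
  · rw [List.length_take, List.length_drop]; omega
  · rw [List.length_take, List.length_drop]; omega

end Substrings

theorem mem_occs_iff {S w : List Char} (hw : w ≠ []) {p : ℕ} :
    p ∈ occs S w ↔ occursAt S w p := by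
  have hlen : 1 ≤ w.length := List.length_pos_iff.mpr hw
  rw [occs, Finset.mem_filter, Finset.mem_Icc, sub, show p + w.length - 1 + 1 - p = w.length by omega]
  constructor
  · rintro ⟨⟨hp1, hp2⟩, hsub⟩
    refine ⟨S.take (p - 1), S.drop (p - 1 + w.length), ?_, by rw [List.length_take]; omega⟩
    conv_lhs => rw [← List.take_append_drop (p - 1) S]
    rw [← List.take_append_drop w.length (S.drop (p - 1)), hsub, List.drop_drop]
    simp [List.append_assoc, Nat.add_comm]
  · rintro ⟨pre, post, rfl, rfl⟩
    refine ⟨⟨by omega, by simp; omega⟩, ?_⟩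
    rw [Nat.add_sub_cancel, List.append_assoc, List.drop_left, List.take_left]

theorem uniqueIn.eq_of_occursAt {S w : List Char} (hu : uniqueIn S w) (hw : w ≠ [])
    {p q : ℕ} (hp : occursAt S w p) (hq : occursAt S w q) : p = q :=
  Finset.card_le_one.mp hu.le _ ((mem_occs_iff hw).mpr hp) _ ((mem_occs_iff hw).mpr hq)

theorem UPS.centered_of_le {S : List Char} {i₁ j₁ i₂ j₂ : ℕ} (h₁ : UPS S i₁ j₁)
    (h₂ : UPS S i₂ j₂) (hi : i₁ ≤ i₂) (hj : j₂ ≤ j₁) : i₂ - i₁ = j₁ - j₂ := by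
  obtain ⟨hi₁, hij₁, hj₁, hpal₁, -⟩ := h₁
  obtain ⟨hi₂, hij₂, hj₂, hpal₂, huniq₂⟩ := h₂
  obtain ⟨A, B, hAB, hA, hB⟩ := sub_eq_append_sub_append hi₁ hi hij₂ hj hj₁
  have hBA := List.eq_reverse_append_append_reverse_of_palindrome hpal₁ hpal₂ hAB
  have hocc := occursAt_sub hi₁ hij₁ hj₁
  have := huniq₂.eq_of_occursAt (sub_ne_nil hi₂ hij₂ hj₂) (hocc.infix hAB) (hocc.infix hBA)
  simp only [List.length_reverse] at this
  omega

theorem not_uniqueIn_sub_of_two_le_card_occs {S : List Char} {i j i' j' : ℕ} (hi : 1 ≤ i)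
    (hii' : i ≤ i') (hij' : i' ≤ j') (hj'j : j' ≤ j) (hj : j ≤ S.length)
    (hrep : 2 ≤ (occs S (sub S i j)).card) : ¬ uniqueIn S (sub S i' j') := by
  intro huniq
  obtain ⟨A, B, hAB, -, -⟩ := sub_eq_append_sub_append hi hii' hij' hj'j hj
  obtain ⟨p, hp, q, hq, hpq⟩ := Finset.one_lt_card.mp hrep
  rw [mem_occs_iff (sub_ne_nil hi (hii'.trans (hij'.trans hj'j)) hj)] at hp hq
  have := huniq.eq_of_occursAt (sub_ne_nil (hi.trans hii') hij' (hj'j.trans hj))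
    (hp.infix hAB) (hq.infix hAB)
  omega

theorem stmt3 (S : List Char) (i1 j1 i2 j2 : ℕ)
    (h1 : MUPS S i1 j1) (h2 : MUPS S i2 j2) (hne : (i1, j1) ≠ (i2, j2)) :
    ¬ (i1 ≤ i2 ∧ j2 ≤ j1) := by
  rintro ⟨hi, hj⟩
  have hcentered := h1.1.centered_of_le h2.1 hi hj
  have hlt : i1 < i2 := by
    by_contra! hge
    exact hne (Prod.ext (by omega) (by omega))
  obtain ⟨⟨hi1, -, hj1, -⟩, hrep⟩ := h1
  obtain ⟨⟨-, hij2, -, -, huniq2⟩, -⟩ := h2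
  exact not_uniqueIn_sub_of_two_le_card_occs (by omega) (by omega) hij2 (by omega) (by omega)
    (hrep.resolve_left (by omega)) huniq2
end

section
/- Every unique palindromic substring S[i..j] of S contains a MUPS of S with the same center: there exists k ≥ 0 such that [i+k, j-k] is a MUPS of S. -/
lemma isPal_tail_dropLast {w : List Char} (h : isPal w) : isPal w.tail.dropLast := by
  unfold isPal at *
  rw [← List.tail_reverse, ← List.dropLast_reverse, h, List.tail_dropLast]

lemma sub_succ_pred (S : List Char) {i j : ℕ} (hi : 1 ≤ i) (hj : j ≤ S.length) :
    sub S (i + 1) (j - 1) = (sub S i j).tail.dropLast := by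
  simp only [sub, List.dropLast_eq_take, List.tail_take_eq_take_tail, List.tail_drop,
    List.take_take, List.length_take, List.length_drop]
  congr 2 <;> omega

lemma self_mem_occs_sub (S : List Char) {i j : ℕ} (hi : 1 ≤ i) (hij : i ≤ j) (hj : j ≤ S.length) :
    i ∈ occs S (sub S i j) := by
  have hlen : (sub S i j).length = j + 1 - i := by
    simp only [sub, List.length_take, List.length_drop]; omega
  simp only [occs, Finset.mem_filter, Finset.mem_Icc, hlen]
  exact ⟨⟨hi, by omega⟩, by congr 1; omega⟩

lemma UPS.inner {S : List Char} {i j : ℕ} (h : UPS S i j) (hij : i + 2 ≤ j)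
    (hocc : (occs S (sub S (i + 1) (j - 1))).card < 2) : UPS S (i + 1) (j - 1) := by
  obtain ⟨hi, -, hj, hpal, -⟩ := h
  have hmem := self_mem_occs_sub S (i := i + 1) (j := j - 1) (by omega) (by omega) (by omega)
  have hpos := Finset.card_pos.mpr ⟨_, hmem⟩
  refine ⟨by omega, by omega, by omega, ?_, by unfold uniqueIn; omega⟩
  rw [sub_succ_pred S hi hj]
  exact isPal_tail_dropLast hpal

theorem stmt5 (S : List Char) (i j : ℕ) (h : UPS S i j) :
    ∃ k, 2 * k ≤ j - i ∧ MUPS S (i + k) (j - k) := by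
  by_cases hM : j + 1 - i ≤ 2 ∨ 2 ≤ (occs S (sub S (i + 1) (j - 1))).card
  · exact ⟨0, by omega, h, hM⟩
  push Not at hM
  obtain ⟨k, hk, hMUPS⟩ := stmt5 S (i + 1) (j - 1) (h.inner (by omega) hM.2)
  refine ⟨k + 1, by omega, ?_⟩
  rwa [show i + (k + 1) = i + 1 + k by omega, show j - (k + 1) = j - 1 - k by omega]
termination_by j - i
end

section
/- If S[i..j] is a SUPS of S for an interval [s,t], then [i,j] contains exactly one MUPS of S, and that MUPS has the same center as [i,j] (i.e., if [x,y] is the MUPS, then x+y = i+j). -/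
/-!
Reflecting a palindrome `S[i..j]` maps a substring `S[x..y]` to `S[i+j-y..i+j-x]` with the
reversed content. If `S[x..y]` is a unique palindrome, the mirror copy must be itself, so
`x + y = i + j`: every unique palindrome inside `[i,j]` shares its center. Peeling matching end
characters off `[i,j]` while the inner palindrome stays unique ends at a MUPS with that center.
Two MUPSs with a common center are equal, since the shorter one lies inside the inner part of the
longer one, which occurs twice.
-/

lemma List.reverse_take_drop_of_reverse_eq {α : Type*} {l : List α} (hl : l.reverse = l)
    {a b : ℕ} (hab : a + b ≤ l.length) :
    ((l.drop a).take b).reverse = (l.drop (l.length - a - b)).take b := by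
  rw [List.reverse_take, List.reverse_drop, hl, List.length_drop, List.drop_take,
    show l.length - a - (l.length - a - b) = b by omega]

section Substrings

variable (S : List Char)

lemma sub_length {i j : ℕ} (hi : 1 ≤ i) (hj : j ≤ S.length) :
    (sub S i j).length = j + 1 - i := by
  simp only [sub, List.length_take, List.length_drop]
  omega

lemma sub_eq_drop_take_sub {i j x y : ℕ} (hi : 1 ≤ i) (hx : i ≤ x) (hy : y ≤ j) :
    sub S x y = ((sub S i j).drop (x - i)).take (y + 1 - x) := by
  rw [sub, sub, List.drop_take, List.drop_drop, List.take_take,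
    show min (y + 1 - x) (j + 1 - i - (x - i)) = y + 1 - x by omega,
    show i - 1 + (x - i) = x - 1 by omega]

lemma reverse_sub_of_isPal {i j x y : ℕ} (hi : 1 ≤ i) (hj : j ≤ S.length)
    (hpal : isPal (sub S i j)) (hx : i ≤ x) (hxy : x ≤ y) (hy : y ≤ j) :
    (sub S x y).reverse = sub S (i + j - y) (i + j - x) := by
  have hlen := sub_length S hi hj
  rw [sub_eq_drop_take_sub S hi hx hy,
    List.reverse_take_drop_of_reverse_eq hpal (by rw [hlen]; omega), hlen,
    sub_eq_drop_take_sub S (j := j) (x := i + j - y) (y := i + j - x) hi (by omega) (by omega),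
    show i + j - x + 1 - (i + j - y) = y + 1 - x by omega,
    show i + j - y - i = j + 1 - i - (x - i) - (y + 1 - x) by omega]

lemma mem_occs_sub_iff {x y : ℕ} (hx : 1 ≤ x) (hxy : x ≤ y) (hy : y ≤ S.length) (p : ℕ) :
    p ∈ occs S (sub S x y) ↔
      1 ≤ p ∧ p + y - x ≤ S.length ∧ sub S p (p + y - x) = sub S x y := by
  rw [occs, Finset.mem_filter, Finset.mem_Icc, sub_length S hx hy,
    show p + (y + 1 - x) - 1 = p + y - x by omega]
  constructor
  · rintro ⟨⟨hp, -⟩, heq⟩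
    have hlen := congrArg List.length heq
    rw [sub_length S hx hy] at hlen
    simp only [sub, List.length_take, List.length_drop] at hlen
    exact ⟨hp, by omega, heq⟩
  · rintro ⟨hp, hpy, heq⟩
    exact ⟨⟨hp, by omega⟩, heq⟩

lemma mem_occs_sub_self {x y : ℕ} (hx : 1 ≤ x) (hxy : x ≤ y) (hy : y ≤ S.length) :
    x ∈ occs S (sub S x y) :=
  (mem_occs_sub_iff S hx hxy hy x).2 ⟨hx, by omega, by rw [show x + y - x = y by omega]⟩

lemma card_occs_sub_le_of_le {i j x y : ℕ} (hi : 1 ≤ i) (hx : i ≤ x) (hxy : x ≤ y)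
    (hy : y ≤ j) (hj : j ≤ S.length) :
    (occs S (sub S i j)).card ≤ (occs S (sub S x y)).card := by
  refine Finset.card_le_card_of_injOn (· + (x - i)) (fun p hp => ?_)
    (fun a _ b _ hab => by simpa using hab)
  obtain ⟨hp, hpj, heq⟩ := (mem_occs_sub_iff S hi (by omega) hj p).1 hp
  refine Finset.mem_coe.2 <|
    (mem_occs_sub_iff S (by omega) hxy (by omega) (p + (x - i))).2 ⟨by omega, by omega, ?_⟩
  rw [sub_eq_drop_take_sub S (j := p + j - i) hp (by omega) (by omega), heq,
    sub_eq_drop_take_sub S hi hx hy, Nat.add_sub_cancel_left,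
    show p + (x - i) + y - x + 1 - (p + (x - i)) = y + 1 - x by omega]

end Substrings

lemma isPal_sub_inner {S : List Char} {i j : ℕ} (hi : 1 ≤ i) (hj : j ≤ S.length)
    (hij : i + 2 ≤ j) (hpal : isPal (sub S i j)) : isPal (sub S (i + 1) (j - 1)) := by
  rw [isPal, reverse_sub_of_isPal S hi hj hpal (by omega) (by omega) (by omega),
    show i + j - (j - 1) = i + 1 by omega, show i + j - (i + 1) = j - 1 by omega]

lemma UPS.add_eq_of_isPal {S : List Char} {i j x y : ℕ} (hxy : UPS S x y) (hi : 1 ≤ i)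
    (hj : j ≤ S.length) (hpal : isPal (sub S i j)) (hx : i ≤ x) (hy : y ≤ j) :
    x + y = i + j := by
  obtain ⟨hx1, hxy, hyS, hpalxy, huniq⟩ := hxy
  have hmirror : i + j - y ∈ occs S (sub S x y) := by
    refine (mem_occs_sub_iff S hx1 hxy hyS _).2 ⟨by omega, by omega, ?_⟩
    rw [show i + j - y + y - x = i + j - x by omega,
      ← reverse_sub_of_isPal S hi hj hpal hx hxy hy, hpalxy]
  have := Finset.card_le_one.1 huniq.le _ hmirror _ (mem_occs_sub_self S hx1 hxy hyS)
  omega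

lemma UPS.exists_MUPS {S : List Char} {i j : ℕ} (h : UPS S i j) :
    ∃ x y, MUPS S x y ∧ i ≤ x ∧ y ≤ j ∧ x + y = i + j := by
  by_cases hm : MUPS S i j
  · exact ⟨i, j, hm, le_rfl, le_rfl, rfl⟩
  have hnot : ¬(j + 1 - i ≤ 2 ∨ 2 ≤ (occs S (sub S (i + 1) (j - 1))).card) :=
    fun hc => hm ⟨h, hc⟩
  obtain ⟨hi, -, hj, hpal, -⟩ := h
  have hinner : UPS S (i + 1) (j - 1) := by
    refine ⟨by omega, by omega, by omega, isPal_sub_inner hi hj (by omega) hpal, ?_⟩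
    have hpos := Finset.card_pos.2
      ⟨_, mem_occs_sub_self S (x := i + 1) (y := j - 1) (by omega) (by omega) (by omega)⟩
    show _ = 1
    omega
  obtain ⟨x, y, hxy, hx, hy, hc⟩ := hinner.exists_MUPS
  exact ⟨x, y, hxy, by omega, by omega, by omega⟩
termination_by j - i

lemma MUPS.le_of_add_eq {S : List Char} {x y x' y' : ℕ} (hm : MUPS S x y) (hu : UPS S x' y')
    (hc : x + y = x' + y') : x' ≤ x := by
  by_contra hlt
  obtain ⟨hx', hxy', hy', -, huniq⟩ := hu
  obtain ⟨⟨hx, -, hyS, -⟩, hshort | hrepeat⟩ := hm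
  · omega
  · have := card_occs_sub_le_of_le S (i := x + 1) (j := y - 1) (by omega) (by omega) hxy'
      (by omega) (by omega)
    rw [uniqueIn] at huniq
    omega

theorem stmt6 (S : List Char) (s t i j : ℕ) (h : SUPS S s t i j) :
    ∃ x y, MUPS S x y ∧ i ≤ x ∧ y ≤ j ∧ x + y = i + j ∧
      ∀ x' y', MUPS S x' y' → i ≤ x' → y' ≤ j → x' = x ∧ y' = y := by
  obtain ⟨hups, -⟩ := h
  obtain ⟨x, y, hm, hx, hy, hc⟩ := hups.exists_MUPS
  refine ⟨x, y, hm, hx, hy, hc, fun x' y' hm' hx' hy' => ?_⟩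
  obtain ⟨hi, -, hj, hpal, -⟩ := hups
  have hc' := hm'.1.add_eq_of_isPal hi hj hpal hx' hy'
  have := hm.le_of_add_eq hm'.1 (by omega)
  have := hm'.le_of_add_eq hm.1 (by omega)
  omega
end
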